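/- arXiv:math/0404550 — 2 statements merged into one kernel-verified Lean document; each statement's English description precedes it below -/
import Mathlib

section
/- Let Q be a unital algebra over a field F of characteristic ≠ 2 and let N: Q → F be a quadratic form with N(1) = 1 such that x·x − N(x,1)x + N(x)1 = 0 for all x ∈ Q, where N(x,y) := N(x+y) − N(x) − N(y). Assume Q is flexible, satisfies the Jordan identity, and every D_{x,y} := L_{[x,y]} − [L_x,L_y] is a derivation of Q (i.e., Q belongs to the variety 𝒱). Define x̄ := N(x,1)1 − x and a triple product xyz := (x̄·y)·z − x̄·(y·z) + y·(x̄·z). Then Q with this triple product and the symmetric bilinear form ⟨x|y⟩ := ½N(x,y) is a (−1,−1)-balanced Freudenthal Kantor triple system: the GJTS identity uv(xyz) = (uvx)yz − x(vuy)z + xy(uvz) holds and xxy = xyx = N(x)y for all x, y. -/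
/-- `D_{x,y} = L_{[x,y]} - [L_x, L_y]` for the (nonassociative) bilinear
multiplication `mul` on `Q`. -/
def Dop {F Q : Type*} [Field F] [AddCommGroup Q] [Module F Q]
    (mul : Q →ₗ[F] Q →ₗ[F] Q) (x y : Q) : Q →ₗ[F] Q :=
  mul (mul x y - mul y x) - (mul x ∘ₗ mul y - mul y ∘ₗ mul x)

/-- The triple product `xyz := (x̄·y)·z − x̄·(y·z) + y·(x̄·z)`, where
`x̄ = N(x,1)1 − x` is the standard involution of a quadratic algebra with
norm `N` and unit `one`. -/
def qtrip {F Q : Type*} [Field F] [AddCommGroup Q] [Module F Q]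
    (mul : Q →ₗ[F] Q →ₗ[F] Q) (N : QuadraticForm F Q) (one x y z : Q) : Q :=
  mul (mul (QuadraticMap.polar N x one • one - x) y) z -
    mul (QuadraticMap.polar N x one • one - x) (mul y z) +
    mul y (mul (QuadraticMap.polar N x one • one - x) z)

private theorem bfkts_lemA {F Q : Type*} [Field F] [AddCommGroup Q] [Module F Q]
    (mul : Q →ₗ[F] Q →ₗ[F] Q) (one : Q) (N : QuadraticForm F Q)
    (hquad : ∀ x : Q, mul x x - QuadraticMap.polar N x one • x + N x • one = 0)
    (a b : Q) :
    mul a b + mul b a - QuadraticMap.polar N a one • b - QuadraticMap.polar N b one • a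
      + QuadraticMap.polar N a b • one = 0 := by
  have h := hquad (a + b)
  have hab : (N : Q → F) (a + b) = N a + N b + QuadraticMap.polar N a b :=
    QuadraticMap.map_add (⇑N) a b
  rw [hab] at h
  simp only [map_add, LinearMap.add_apply, QuadraticMap.polar_add_left] at h
  linear_combination (norm := module) h - hquad a - hquad b

private theorem bfkts_one_ne {F Q : Type*} [Field F] [AddCommGroup Q] [Module F Q]
    (one : Q) (N : QuadraticForm F Q) (hN1 : N one = 1) : one ≠ 0 := by
  intro h
  rw [h, QuadraticMap.map_zero] at hN1
  exact one_ne_zero hN1.symm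

private theorem bfkts_scancel {F Q : Type*} [Field F] [AddCommGroup Q] [Module F Q]
    (one : Q) (N : QuadraticForm F Q) (hN1 : N one = 1) (s : F) (h : s • one = 0) :
    s = 0 := by
  rcases smul_eq_zero.mp h with h | h
  · exact h
  · exact absurd h (bfkts_one_ne one N hN1)

private theorem bfkts_tone {F Q : Type*} [Field F] [AddCommGroup Q] [Module F Q]
    (one : Q) (N : QuadraticForm F Q) (hN1 : N one = 1) :
    QuadraticMap.polar N one one = 2 := by
  have h1 : (N : Q → F) (one + one) = N one + N one + QuadraticMap.polar N one one :=
    QuadraticMap.map_add (⇑N) one one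
  have h2 : (N : Q → F) (one + one) = 4 := by
    rw [← two_smul F one, QuadraticMap.map_smul, hN1]
    norm_num
  rw [h2, hN1] at h1
  linear_combination -h1

private theorem bfkts_sigma {F Q : Type*} [Field F] [AddCommGroup Q] [Module F Q]
    (mul : Q →ₗ[F] Q →ₗ[F] Q) (one : Q) (N : QuadraticForm F Q) (hN1 : N one = 1)
    (honel : ∀ x : Q, mul one x = x) (honer : ∀ x : Q, mul x one = x)
    (hquad : ∀ x : Q, mul x x - QuadraticMap.polar N x one • x + N x • one = 0)
    (flex : ∀ x y : Q, mul (mul x y) x = mul x (mul y x))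
    (x y : Q) :
    QuadraticMap.polar N (mul x y) one
      - QuadraticMap.polar N x one * QuadraticMap.polar N y one
      + QuadraticMap.polar N x y = 0 := by
  set sg : F := QuadraticMap.polar N (mul x y) one
      - QuadraticMap.polar N x one * QuadraticMap.polar N y one
      + QuadraticMap.polar N x y with hsg
  have I2 : mul x (mul x y) + mul x (mul y x)
      - QuadraticMap.polar N x one • mul x y - QuadraticMap.polar N y one • mul x x
      + QuadraticMap.polar N x y • x = 0 := by
    have h := congrArg (fun r => mul x r) (bfkts_lemA mul one N hquad x y)
    simp only [map_add, map_sub, map_smul, map_zero, honer] at h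
    linear_combination (norm := module) h
  have key : sg • x = (QuadraticMap.polar N (mul x y) x
      - QuadraticMap.polar N y one * N x) • one := by
    rw [hsg]
    linear_combination (norm := module)
      flex x y + I2 - bfkts_lemA mul one N hquad (mul x y) x
        + (QuadraticMap.polar N y one) • hquad x
  by_cases hc : sg = 0
  · exact hc
  · exfalso
    have hx : x = (sg⁻¹ * (QuadraticMap.polar N (mul x y) x
        - QuadraticMap.polar N y one * N x)) • one := by
      rw [mul_smul, ← key, smul_smul, inv_mul_cancel₀ hc, one_smul]
    apply hc
    rw [hsg, hx]
    simp only [map_smul, LinearMap.smul_apply, honel, QuadraticMap.polar_smul_left,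
      smul_eq_mul, bfkts_tone one N hN1]
    rw [QuadraticMap.polar_comm (⇑N) one y]
    ring

private theorem bfkts_flexL {F Q : Type*} [Field F] [AddCommGroup Q] [Module F Q]
    (mul : Q →ₗ[F] Q →ₗ[F] Q)
    (flex : ∀ x y : Q, mul (mul x y) x = mul x (mul y x))
    (a b c : Q) :
    mul (mul a c) b + mul (mul b c) a - mul a (mul c b) - mul b (mul c a) = 0 := by
  have h := flex (a + b) c
  simp only [map_add, LinearMap.add_apply] at h
  linear_combination (norm := module) h - flex a c - flex b c

private theorem bfkts_N1 {F Q : Type*} [Field F] [AddCommGroup Q] [Module F Q]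
    (mul : Q →ₗ[F] Q →ₗ[F] Q) (one : Q) (N : QuadraticForm F Q) (hN1 : N one = 1)
    (honel : ∀ x : Q, mul one x = x) (honer : ∀ x : Q, mul x one = x)
    (hquad : ∀ x : Q, mul x x - QuadraticMap.polar N x one • x + N x • one = 0)
    (flex : ∀ x y : Q, mul (mul x y) x = mul x (mul y x))
    (a b c : Q) :
    QuadraticMap.polar N (mul a c) b + QuadraticMap.polar N (mul b c) a
      - QuadraticMap.polar N a b * QuadraticMap.polar N c one = 0 := by
  have Lb : mul b (mul a c) + mul b (mul c a)
      - QuadraticMap.polar N a one • mul b c - QuadraticMap.polar N c one • mul b a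
      + QuadraticMap.polar N a c • b = 0 := by
    have h := congrArg (fun r => mul b r) (bfkts_lemA mul one N hquad a c)
    simp only [map_add, map_sub, map_smul, map_zero, honer] at h
    linear_combination (norm := module) h
  have La : mul a (mul b c) + mul a (mul c b)
      - QuadraticMap.polar N b one • mul a c - QuadraticMap.polar N c one • mul a b
      + QuadraticMap.polar N b c • a = 0 := by
    have h := congrArg (fun r => mul a r) (bfkts_lemA mul one N hquad b c)
    simp only [map_add, map_sub, map_smul, map_zero, honer] at h
    linear_combination (norm := module) h
  apply bfkts_scancel one N hN1
  linear_combination (norm := module)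
    (-1 : F) • bfkts_flexL mul flex a b c - Lb - La
      + bfkts_lemA mul one N hquad (mul a c) b + bfkts_lemA mul one N hquad (mul b c) a
      + (bfkts_sigma mul one N hN1 honel honer hquad flex a c) • b
      + (bfkts_sigma mul one N hN1 honel honer hquad flex b c) • a
      - (QuadraticMap.polar N c one) • bfkts_lemA mul one N hquad a b

private theorem bfkts_N2 {F Q : Type*} [Field F] [AddCommGroup Q] [Module F Q]
    (mul : Q →ₗ[F] Q →ₗ[F] Q) (one : Q) (N : QuadraticForm F Q) (hN1 : N one = 1)
    (honel : ∀ x : Q, mul one x = x) (honer : ∀ x : Q, mul x one = x)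
    (hquad : ∀ x : Q, mul x x - QuadraticMap.polar N x one • x + N x • one = 0)
    (flex : ∀ x y : Q, mul (mul x y) x = mul x (mul y x))
    (a b c : Q) :
    QuadraticMap.polar N (mul c a) b + QuadraticMap.polar N (mul c b) a
      - QuadraticMap.polar N a b * QuadraticMap.polar N c one = 0 := by
  have h1 := congrArg (fun r => QuadraticMap.polar N r b) (bfkts_lemA mul one N hquad c a)
  have h2 := congrArg (fun r => QuadraticMap.polar N r a) (bfkts_lemA mul one N hquad c b)
  simp only [QuadraticMap.polar_add_left, QuadraticMap.polar_sub_left,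
    QuadraticMap.polar_smul_left, QuadraticMap.polar_zero_left, smul_eq_mul] at h1 h2
  linear_combination h1 + h2 - bfkts_N1 mul one N hN1 honel honer hquad flex a b c
    - QuadraticMap.polar_comm (⇑N) one b * QuadraticMap.polar N c a
    - QuadraticMap.polar_comm (⇑N) one a * QuadraticMap.polar N c b
    + QuadraticMap.polar_comm (⇑N) b a * QuadraticMap.polar N c one

private theorem bfkts_DopApply {F Q : Type*} [Field F] [AddCommGroup Q] [Module F Q]
    (mul : Q →ₗ[F] Q →ₗ[F] Q) (a b c : Q) :
    Dop mul a b c = mul (mul a b) c - mul (mul b a) c - mul a (mul b c) + mul b (mul a c) := by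
  simp only [Dop, LinearMap.sub_apply, LinearMap.coe_comp, Function.comp_apply, map_sub,
    LinearMap.sub_apply]
  abel

private theorem bfkts_hderE {F Q : Type*} [Field F] [AddCommGroup Q] [Module F Q]
    (mul : Q →ₗ[F] Q →ₗ[F] Q)
    (hder : ∀ x y a b : Q,
      Dop mul x y (mul a b) = mul (Dop mul x y a) b + mul a (Dop mul x y b))
    (a b c d : Q) :
    mul (mul a b) (mul c d) - mul (mul b a) (mul c d)
      - mul a (mul b (mul c d)) + mul b (mul a (mul c d))
      - mul (mul (mul a b) c) d + mul (mul (mul b a) c) d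
      + mul (mul a (mul b c)) d - mul (mul b (mul a c)) d
      - mul c (mul (mul a b) d) + mul c (mul (mul b a) d)
      + mul c (mul a (mul b d)) - mul c (mul b (mul a d)) = 0 := by
  have h := hder a b c d
  rw [bfkts_DopApply, bfkts_DopApply, bfkts_DopApply] at h
  simp only [map_add, map_sub, LinearMap.add_apply, LinearMap.sub_apply] at h
  linear_combination (norm := module) h

private theorem bfkts_tder {F Q : Type*} [Field F] [AddCommGroup Q] [Module F Q]
    (mul : Q →ₗ[F] Q →ₗ[F] Q) (one : Q) (N : QuadraticForm F Q)
    (hN1 : N one = 1)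
    (honel : ∀ x : Q, mul one x = x) (honer : ∀ x : Q, mul x one = x)
    (hquad : ∀ x : Q, mul x x - QuadraticMap.polar N x one • x + N x • one = 0)
    (hder : ∀ x y a b : Q,
      Dop mul x y (mul a b) = mul (Dop mul x y a) b + mul a (Dop mul x y b))
    (u v x : Q) :
    QuadraticMap.polar N (Dop mul u v x) one = 0 := by
  have hone : Dop mul u v one = 0 := by
    have h := hder u v one one
    rw [honel one] at h
    rw [honer, honel] at h
    linear_combination (norm := module) -h
  have hDsq : Dop mul u v (mul x x) = QuadraticMap.polar N x one • Dop mul u v x := by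
    have h := congrArg (fun r => Dop mul u v r)
      (show mul x x = QuadraticMap.polar N x one • x - N x • one by
        linear_combination (norm := module) hquad x)
    simp only [map_sub, map_smul, hone, smul_zero, sub_zero] at h
    exact h
  have key : QuadraticMap.polar N (Dop mul u v x) one • x
      = QuadraticMap.polar N x (Dop mul u v x) • one := by
    have h2 := hder u v x x
    rw [hDsq] at h2
    linear_combination (norm := module) -h2 - bfkts_lemA mul one N hquad x (Dop mul u v x)
  by_cases hc : QuadraticMap.polar N (Dop mul u v x) one = 0
  · exact hc
  · exfalso
    apply hc
    have hx : x = (QuadraticMap.polar N (Dop mul u v x) one)⁻¹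
        • (QuadraticMap.polar N x (Dop mul u v x) • one) := by
      rw [← key, smul_smul, inv_mul_cancel₀ hc, one_smul]
    have hDx : Dop mul u v x = 0 := by
      rw [hx]
      simp only [map_smul, hone, smul_zero]
    rw [hDx, QuadraticMap.polar_zero_left]
set_option maxHeartbeats 1000000 in
private theorem bfkts_keyL {F Q : Type*} [Field F] [AddCommGroup Q] [Module F Q]
    (mul : Q →ₗ[F] Q →ₗ[F] Q) (one : Q) (N : QuadraticForm F Q)
    (hchar : (2 : F) ≠ 0) (hN1 : N one = 1)
    (honel : ∀ x : Q, mul one x = x) (honer : ∀ x : Q, mul x one = x)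
    (hquad : ∀ x : Q, mul x x - QuadraticMap.polar N x one • x + N x • one = 0)
    (flex : ∀ x y : Q, mul (mul x y) x = mul x (mul y x))
    (hder : ∀ x y a b : Q,
      Dop mul x y (mul a b) = mul (Dop mul x y a) b + mul a (Dop mul x y b))
    (w x y z : Q) :
    (((1 : F)) • (mul (mul (mul w x) y) z)
      + ((-1 : F)) • (mul (mul w x) (mul y z))
      + ((1 : F)) • (mul (mul w y) (mul x z))
      + ((-1 : F) * (QuadraticMap.polar N x one)) • (mul (mul w y) z)
      + ((1 : F)) • (mul (mul x (mul w y)) z)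
      + ((1 : F)) • (mul (mul x y) (mul w z))
      + ((-1 : F) * (QuadraticMap.polar N w one)) • (mul (mul x y) z)
      + ((-1 : F)) • (mul w (mul (mul x y) z))
      + ((1 : F)) • (mul w (mul x (mul y z)))
      + ((-1 : F)) • (mul w (mul y (mul x z)))
      + ((1 : F) * (QuadraticMap.polar N x one)) • (mul w (mul y z))
      + ((-1 : F)) • (mul x (mul (mul w y) z))
      + ((-1 : F)) • (mul x (mul y (mul w z)))
      + ((1 : F) * (QuadraticMap.polar N w one)) • (mul x (mul y z))
      + ((1 : F)) • (mul y (mul (mul w x) z))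
      + ((-1 : F) * (QuadraticMap.polar N x one)) • (mul y (mul w z))
      + ((1 : F)) • (mul y (mul x (mul w z)))
      + ((-1 : F) * (QuadraticMap.polar N w one)) • (mul y (mul x z))
      + ((-1 : F) * (QuadraticMap.polar N (mul w x) one) + (1 : F) * (QuadraticMap.polar N w one) * (QuadraticMap.polar N x one)) • (mul y z)) = 0 := by
  have C1 := congrArg (fun r => mul r (mul y z)) (bfkts_lemA mul one N hquad w x)
  simp only [map_add, map_sub, map_smul, map_zero, LinearMap.add_apply, LinearMap.sub_apply, LinearMap.smul_apply, LinearMap.zero_apply, honel, honer] at C1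
  have C2 := congrArg (fun r => mul (mul r y) z) (bfkts_lemA mul one N hquad w x)
  simp only [map_add, map_sub, map_smul, map_zero, LinearMap.add_apply, LinearMap.sub_apply, LinearMap.smul_apply, LinearMap.zero_apply, honel, honer] at C2
  have C3 := congrArg (fun r => mul (mul y r) z) (bfkts_lemA mul one N hquad w x)
  simp only [map_add, map_sub, map_smul, map_zero, LinearMap.add_apply, LinearMap.sub_apply, LinearMap.smul_apply, LinearMap.zero_apply, honel, honer] at C3
  have C4 := congrArg (fun r => mul y (mul r z)) (bfkts_lemA mul one N hquad w x)
  simp only [map_add, map_sub, map_smul, map_zero, LinearMap.add_apply, LinearMap.sub_apply, LinearMap.smul_apply, LinearMap.zero_apply, honel, honer] at C4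
  have C5 := congrArg (fun r => mul r (mul x z)) (bfkts_lemA mul one N hquad w y)
  simp only [map_add, map_sub, map_smul, map_zero, LinearMap.add_apply, LinearMap.sub_apply, LinearMap.smul_apply, LinearMap.zero_apply, honel, honer] at C5
  have C6 := congrArg (fun r => mul x (mul r z)) (bfkts_lemA mul one N hquad w y)
  simp only [map_add, map_sub, map_smul, map_zero, LinearMap.add_apply, LinearMap.sub_apply, LinearMap.smul_apply, LinearMap.zero_apply, honel, honer] at C6
  have C7 := congrArg (fun r => mul r (mul w z)) (bfkts_lemA mul one N hquad x y)
  simp only [map_add, map_sub, map_smul, map_zero, LinearMap.add_apply, LinearMap.sub_apply, LinearMap.smul_apply, LinearMap.zero_apply, honel, honer] at C7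
  have C8 := congrArg (fun r => mul w (mul r z)) (bfkts_lemA mul one N hquad x y)
  simp only [map_add, map_sub, map_smul, map_zero, LinearMap.add_apply, LinearMap.sub_apply, LinearMap.smul_apply, LinearMap.zero_apply, honel, honer] at C8
  have D1 := congrArg (fun r => mul r z) (bfkts_lemA mul one N hquad (mul w y) x)
  simp only [map_add, map_sub, map_smul, map_zero, LinearMap.add_apply, LinearMap.sub_apply, LinearMap.smul_apply, LinearMap.zero_apply, honel, honer] at D1
  have D2 := congrArg (fun r => mul r z) (bfkts_lemA mul one N hquad (mul x y) w)
  simp only [map_add, map_sub, map_smul, map_zero, LinearMap.add_apply, LinearMap.sub_apply, LinearMap.smul_apply, LinearMap.zero_apply, honel, honer] at D2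
  have D3 := congrArg (fun r => mul r z) (bfkts_lemA mul one N hquad (mul y w) x)
  simp only [map_add, map_sub, map_smul, map_zero, LinearMap.add_apply, LinearMap.sub_apply, LinearMap.smul_apply, LinearMap.zero_apply, honel, honer] at D3
  have D4 := congrArg (fun r => mul r z) (bfkts_lemA mul one N hquad (mul y x) w)
  simp only [map_add, map_sub, map_smul, map_zero, LinearMap.add_apply, LinearMap.sub_apply, LinearMap.smul_apply, LinearMap.zero_apply, honel, honer] at D4
  have Syw : QuadraticMap.polar N (mul y w) one - QuadraticMap.polar N y one * QuadraticMap.polar N w one + QuadraticMap.polar N w y = 0 := by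
    linear_combination bfkts_sigma mul one N hN1 honel honer hquad flex y w - QuadraticMap.polar_comm (⇑N) y w
  have Syx : QuadraticMap.polar N (mul y x) one - QuadraticMap.polar N y one * QuadraticMap.polar N x one + QuadraticMap.polar N x y = 0 := by
    linear_combination bfkts_sigma mul one N hN1 honel honer hquad flex y x - QuadraticMap.polar_comm (⇑N) y x
  have h2 : (2 : F) • ((((1 : F)) • (mul (mul (mul w x) y) z)
      + ((-1 : F)) • (mul (mul w x) (mul y z))
      + ((1 : F)) • (mul (mul w y) (mul x z))
      + ((-1 : F) * (QuadraticMap.polar N x one)) • (mul (mul w y) z)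
      + ((1 : F)) • (mul (mul x (mul w y)) z)
      + ((1 : F)) • (mul (mul x y) (mul w z))
      + ((-1 : F) * (QuadraticMap.polar N w one)) • (mul (mul x y) z)
      + ((-1 : F)) • (mul w (mul (mul x y) z))
      + ((1 : F)) • (mul w (mul x (mul y z)))
      + ((-1 : F)) • (mul w (mul y (mul x z)))
      + ((1 : F) * (QuadraticMap.polar N x one)) • (mul w (mul y z))
      + ((-1 : F)) • (mul x (mul (mul w y) z))
      + ((-1 : F)) • (mul x (mul y (mul w z)))
      + ((1 : F) * (QuadraticMap.polar N w one)) • (mul x (mul y z))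
      + ((1 : F)) • (mul y (mul (mul w x) z))
      + ((-1 : F) * (QuadraticMap.polar N x one)) • (mul y (mul w z))
      + ((1 : F)) • (mul y (mul x (mul w z)))
      + ((-1 : F) * (QuadraticMap.polar N w one)) • (mul y (mul x z))
      + ((-1 : F) * (QuadraticMap.polar N (mul w x) one) + (1 : F) * (QuadraticMap.polar N w one) * (QuadraticMap.polar N x one)) • (mul y z))) = 0 := by
    linear_combination (norm := module)
      (-1 : F) • (bfkts_hderE mul hder w x y z)
    + (bfkts_hderE mul hder w y x z)
    + (bfkts_hderE mul hder x y w z)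
    + (-1 : F) • C1
    + C2
    + C3
    + C4
    + C5
    + (-1 : F) • C6
    + C7
    + (-1 : F) • C8
    + (bfkts_sigma mul one N hN1 honel honer hquad flex w x) • ((-2 : F) • (mul y z))
    + (bfkts_sigma mul one N hN1 honel honer hquad flex w y) • (mul x z)
    + (bfkts_sigma mul one N hN1 honel honer hquad flex x y) • (mul w z)
    + Syw • ((-1 : F) • (mul x z))
    + Syx • ((-1 : F) • (mul w z))
    + (bfkts_N1 mul one N hN1 honel honer hquad flex w x y) • ((-1 : F) • z)
    + D1
    + D2
    + (-1 : F) • D3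
    + (-1 : F) • D4
    + (bfkts_N2 mul one N hN1 honel honer hquad flex w x y) • z
  rcases smul_eq_zero.mp h2 with h | h
  · exact absurd h hchar
  · exact h

set_option maxHeartbeats 1000000 in
private theorem bfkts_keyD {F Q : Type*} [Field F] [AddCommGroup Q] [Module F Q]
    (mul : Q →ₗ[F] Q →ₗ[F] Q) (one : Q) (N : QuadraticForm F Q)
    (hchar : (2 : F) ≠ 0) (hN1 : N one = 1)
    (honel : ∀ x : Q, mul one x = x) (honer : ∀ x : Q, mul x one = x)
    (hquad : ∀ x : Q, mul x x - QuadraticMap.polar N x one • x + N x • one = 0)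
    (flex : ∀ x y : Q, mul (mul x y) x = mul x (mul y x))
    (hder : ∀ x y a b : Q,
      Dop mul x y (mul a b) = mul (Dop mul x y a) b + mul a (Dop mul x y b))
    (u v x y z : Q) :
    (((1 : F)) • (mul (mul (mul (mul u v) x) y) z)
      + ((-1 : F)) • (mul (mul (mul (mul v u) x) y) z)
      + ((-1 : F)) • (mul (mul (mul u (mul v x)) y) z)
      + ((-1 : F)) • (mul (mul (mul u v) x) (mul y z))
      + ((1 : F)) • (mul (mul (mul u v) y) (mul x z))
      + ((-1 : F) * (QuadraticMap.polar N x one)) • (mul (mul (mul u v) y) z)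
      + ((1 : F)) • (mul (mul (mul v (mul u x)) y) z)
      + ((1 : F)) • (mul (mul (mul v u) x) (mul y z))
      + ((-1 : F)) • (mul (mul (mul v u) y) (mul x z))
      + ((1 : F) * (QuadraticMap.polar N x one)) • (mul (mul (mul v u) y) z)
      + ((1 : F)) • (mul (mul u (mul v x)) (mul y z))
      + ((-1 : F)) • (mul (mul u (mul v y)) (mul x z))
      + ((1 : F) * (QuadraticMap.polar N x one)) • (mul (mul u (mul v y)) z)
      + ((-1 : F)) • (mul (mul u v) (mul (mul x y) z))
      + ((1 : F)) • (mul (mul u v) (mul x (mul y z)))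
      + ((-1 : F)) • (mul (mul u v) (mul y (mul x z)))
      + ((1 : F) * (QuadraticMap.polar N x one)) • (mul (mul u v) (mul y z))
      + ((-1 : F)) • (mul (mul v (mul u x)) (mul y z))
      + ((1 : F)) • (mul (mul v (mul u y)) (mul x z))
      + ((-1 : F) * (QuadraticMap.polar N x one)) • (mul (mul v (mul u y)) z)
      + ((1 : F)) • (mul (mul v u) (mul (mul x y) z))
      + ((-1 : F)) • (mul (mul v u) (mul x (mul y z)))
      + ((1 : F)) • (mul (mul v u) (mul y (mul x z)))
      + ((-1 : F) * (QuadraticMap.polar N x one)) • (mul (mul v u) (mul y z))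
      + ((1 : F)) • (mul (mul x (mul (mul u v) y)) z)
      + ((-1 : F)) • (mul (mul x (mul (mul v u) y)) z)
      + ((-1 : F)) • (mul (mul x (mul u (mul v y))) z)
      + ((1 : F)) • (mul (mul x (mul v (mul u y))) z)
      + ((1 : F)) • (mul (mul x y) (mul (mul u v) z))
      + ((-1 : F)) • (mul (mul x y) (mul (mul v u) z))
      + ((-1 : F)) • (mul (mul x y) (mul u (mul v z)))
      + ((1 : F)) • (mul (mul x y) (mul v (mul u z)))
      + ((1 : F)) • (mul u (mul v (mul (mul x y) z)))
      + ((-1 : F)) • (mul u (mul v (mul x (mul y z))))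
      + ((1 : F)) • (mul u (mul v (mul y (mul x z))))
      + ((-1 : F) * (QuadraticMap.polar N x one)) • (mul u (mul v (mul y z)))
      + ((-1 : F)) • (mul v (mul u (mul (mul x y) z)))
      + ((1 : F)) • (mul v (mul u (mul x (mul y z))))
      + ((-1 : F)) • (mul v (mul u (mul y (mul x z))))
      + ((1 : F) * (QuadraticMap.polar N x one)) • (mul v (mul u (mul y z)))
      + ((-1 : F)) • (mul x (mul (mul (mul u v) y) z))
      + ((1 : F)) • (mul x (mul (mul (mul v u) y) z))
      + ((1 : F)) • (mul x (mul (mul u (mul v y)) z))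
      + ((-1 : F)) • (mul x (mul (mul v (mul u y)) z))
      + ((-1 : F)) • (mul x (mul y (mul (mul u v) z)))
      + ((1 : F)) • (mul x (mul y (mul (mul v u) z)))
      + ((1 : F)) • (mul x (mul y (mul u (mul v z))))
      + ((-1 : F)) • (mul x (mul y (mul v (mul u z))))
      + ((1 : F)) • (mul y (mul (mul (mul u v) x) z))
      + ((-1 : F)) • (mul y (mul (mul (mul v u) x) z))
      + ((-1 : F)) • (mul y (mul (mul u (mul v x)) z))
      + ((-1 : F) * (QuadraticMap.polar N x one)) • (mul y (mul (mul u v) z))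
      + ((1 : F)) • (mul y (mul (mul v (mul u x)) z))
      + ((1 : F) * (QuadraticMap.polar N x one)) • (mul y (mul (mul v u) z))
      + ((1 : F) * (QuadraticMap.polar N x one)) • (mul y (mul u (mul v z)))
      + ((-1 : F) * (QuadraticMap.polar N x one)) • (mul y (mul v (mul u z)))
      + ((1 : F)) • (mul y (mul x (mul (mul u v) z)))
      + ((-1 : F)) • (mul y (mul x (mul (mul v u) z)))
      + ((-1 : F)) • (mul y (mul x (mul u (mul v z))))
      + ((1 : F)) • (mul y (mul x (mul v (mul u z))))
      + ((-1 : F) * (QuadraticMap.polar N (mul (mul u v) x) one) + (1 : F) * (QuadraticMap.polar N (mul (mul v u) x) one) + (1 : F) * (QuadraticMap.polar N (mul u (mul v x)) one) + (-1 : F) * (QuadraticMap.polar N (mul v (mul u x)) one)) • (mul y z)) = 0 := by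
  have T1 : QuadraticMap.polar N (mul (mul u v) x) one - QuadraticMap.polar N (mul (mul v u) x) one - QuadraticMap.polar N (mul u (mul v x)) one + QuadraticMap.polar N (mul v (mul u x)) one = 0 := by
    have h := bfkts_tder mul one N hN1 honel honer hquad hder u v x
    rw [bfkts_DopApply] at h
    rw [QuadraticMap.polar_add_left, QuadraticMap.polar_sub_left,
      QuadraticMap.polar_sub_left] at h
    linear_combination h
  have R1 := congrArg (fun r => mul r z) (bfkts_hderE mul hder u v x y)
  simp only [map_add, map_sub, map_smul, map_zero, LinearMap.add_apply, LinearMap.sub_apply, LinearMap.smul_apply, LinearMap.zero_apply, honel, honer] at R1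
  have L1 := congrArg (fun r => mul x r) (bfkts_hderE mul hder u v y z)
  simp only [map_add, map_sub, map_smul, map_zero, LinearMap.add_apply, LinearMap.sub_apply, LinearMap.smul_apply, LinearMap.zero_apply, honel, honer] at L1
  have L2 := congrArg (fun r => mul y r) (bfkts_hderE mul hder u v x z)
  simp only [map_add, map_sub, map_smul, map_zero, LinearMap.add_apply, LinearMap.sub_apply, LinearMap.smul_apply, LinearMap.zero_apply, honel, honer] at L2
  linear_combination (norm := module)
      (-1 : F) • (bfkts_hderE mul hder u v (mul x y) z)
    + (bfkts_hderE mul hder u v x (mul y z))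
    + (-1 : F) • (bfkts_hderE mul hder u v y (mul x z))
    + T1 • ((-1 : F) • (mul y z))
    + (-1 : F) • R1
    + L1
    + (-1 : F) • L2
    + (QuadraticMap.polar N x one) • (bfkts_hderE mul hder u v y z)


set_option maxHeartbeats 4000000 in
/-- Let `Q` be a unital quadratic algebra over a field of characteristic `≠ 2`
(with quadratic form `N`, `N(1) = 1` and `x·x − N(x,1)x + N(x)1 = 0`), lying in
the variety `𝒱` (flexible, Jordan identity, all `D_{x,y}` derivations).  Then
the triple product `xyz := (x̄·y)·z − x̄·(y·z) + y·(x̄·z)` (with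
`x̄ := N(x,1)1 − x`) together with `⟨x|y⟩ := ½N(x,y)` makes `Q` a
`(−1,−1)`-balanced Freudenthal Kantor triple system: the GJTS identity holds
and `xxy = xyx = N(x)y`. -/
theorem stmt14 {F Q : Type*} [Field F] [AddCommGroup Q] [Module F Q]
    (hchar : (2 : F) ≠ 0)
    (mul : Q →ₗ[F] Q →ₗ[F] Q) (one : Q)
    (honel : ∀ x : Q, mul one x = x) (honer : ∀ x : Q, mul x one = x)
    (N : QuadraticForm F Q) (hN1 : N one = 1)
    (hquad : ∀ x : Q,
      mul x x - QuadraticMap.polar N x one • x + N x • one = 0)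
    (flex : ∀ x y : Q, mul (mul x y) x = mul x (mul y x))
    (jordan : ∀ x y : Q, mul (mul x y) (mul x x) = mul x (mul y (mul x x)))
    (hder : ∀ x y a b : Q,
      Dop mul x y (mul a b) = mul (Dop mul x y a) b + mul a (Dop mul x y b)) :
    (∀ u v x y z : Q,
      qtrip mul N one u v (qtrip mul N one x y z) =
        qtrip mul N one (qtrip mul N one u v x) y z -
          qtrip mul N one x (qtrip mul N one v u y) z +
          qtrip mul N one x y (qtrip mul N one u v z)) ∧
    (∀ x y : Q,
      qtrip mul N one x x y = N x • y ∧ qtrip mul N one x y x = N x • y) := by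
  constructor
  · intro u v x y z
    have K := bfkts_keyL mul one N hchar hN1 honel honer hquad flex hder
      (QuadraticMap.polar N u one • v - mul v u) x y z
    simp only [map_add, map_sub, map_smul, map_zero, LinearMap.add_apply,
    LinearMap.sub_apply, LinearMap.smul_apply, LinearMap.zero_apply,
    QuadraticMap.polar_add_left, QuadraticMap.polar_sub_left, QuadraticMap.polar_smul_left,
    smul_eq_mul, honel, honer, bfkts_tone one N hN1] at K
    have KD := bfkts_keyD mul one N hchar hN1 honel honer hquad flex hder u v x y z
    have Svu : QuadraticMap.polar N (mul v u) one
        - QuadraticMap.polar N v one * QuadraticMap.polar N u one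
        + QuadraticMap.polar N u v = 0 := by
      linear_combination bfkts_sigma mul one N hN1 honel honer hquad flex v u - QuadraticMap.polar_comm (⇑N) v u
    have T1 := congrArg (fun r => mul (mul r y) z) (bfkts_lemA mul one N hquad u v)
    have T2 := congrArg (fun r => mul (mul x (mul r y)) z) (bfkts_lemA mul one N hquad u v)
    have T3 := congrArg (fun r => mul x (mul (mul r y) z)) (bfkts_lemA mul one N hquad u v)
    have T4 := congrArg (fun r => mul (mul r y) (mul x z)) (bfkts_lemA mul one N hquad u v)
    simp only [map_add, map_sub, map_smul, map_zero, LinearMap.add_apply,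
    LinearMap.sub_apply, LinearMap.smul_apply, LinearMap.zero_apply,
    QuadraticMap.polar_add_left, QuadraticMap.polar_sub_left, QuadraticMap.polar_smul_left,
    smul_eq_mul, honel, honer, bfkts_tone one N hN1] at T1 T2 T3 T4
    simp only [qtrip]
    simp only [map_add, map_sub, map_smul, map_zero, LinearMap.add_apply,
    LinearMap.sub_apply, LinearMap.smul_apply, LinearMap.zero_apply,
    QuadraticMap.polar_add_left, QuadraticMap.polar_sub_left, QuadraticMap.polar_smul_left,
    smul_eq_mul, honel, honer, bfkts_tone one N hN1]
    linear_combination (norm := module)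
        K
      + (-1 : F) • KD
      + Svu • (mul x (mul y z))
      + Svu • ((-1 : F) • (mul y (mul x z)))
      + Svu • ((-1 : F) • (mul (mul x y) z))
      + T2
      + (-1 : F) • T3
      + T4
      + ((-1 : F) * QuadraticMap.polar N x one) • T1
      + Svu • (QuadraticMap.polar N x one • (mul y z))
  · intro x y
    refine ⟨?_, ?_⟩
    · have P1 := congrArg (fun r => mul r y) (hquad x)
      simp only [map_add, map_sub, map_smul, map_zero, LinearMap.add_apply,
    LinearMap.sub_apply, LinearMap.smul_apply, LinearMap.zero_apply,
    QuadraticMap.polar_add_left, QuadraticMap.polar_sub_left, QuadraticMap.polar_smul_left,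
    smul_eq_mul, honel, honer, bfkts_tone one N hN1] at P1
      simp only [qtrip]
      simp only [map_add, map_sub, map_smul, map_zero, LinearMap.add_apply,
    LinearMap.sub_apply, LinearMap.smul_apply, LinearMap.zero_apply,
    QuadraticMap.polar_add_left, QuadraticMap.polar_sub_left, QuadraticMap.polar_smul_left,
    smul_eq_mul, honel, honer, bfkts_tone one N hN1]
      linear_combination (norm := module) (-1 : F) • P1
    · have P2 := congrArg (fun r => mul y r) (hquad x)
      simp only [map_add, map_sub, map_smul, map_zero, LinearMap.add_apply,
    LinearMap.sub_apply, LinearMap.smul_apply, LinearMap.zero_apply,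
    QuadraticMap.polar_add_left, QuadraticMap.polar_sub_left, QuadraticMap.polar_smul_left,
    smul_eq_mul, honel, honer, bfkts_tone one N hN1] at P2
      simp only [qtrip]
      simp only [map_add, map_sub, map_smul, map_zero, LinearMap.add_apply,
    LinearMap.sub_apply, LinearMap.smul_apply, LinearMap.zero_apply,
    QuadraticMap.polar_add_left, QuadraticMap.polar_sub_left, QuadraticMap.polar_smul_left,
    smul_eq_mul, honel, honer, bfkts_tone one N hN1]
      linear_combination (norm := module) (-1 : F) • flex x y + (-1 : F) • P2
end

section
/- Let Q be a nonzero unital algebra over a field F of characteristic ≠ 2 with a quadratic form N: Q → F, N(1) = 1, such that x·x − N(x,1)x + N(x)1 = 0 for all x (N(x,y) := N(x+y) − N(x) − N(y)); assume Q is flexible, satisfies the Jordan identity, and every D_{x,y} := L_{[x,y]} − [L_x,L_y] is a derivation of Q. Set x̄ := N(x,1)1 − x and define the triple product xyz := (x̄·y)·z − x̄·(y·z) + y·(x̄·z). Then the triple system (Q, xyz) is simple — i.e., its only triple ideals are 0 and Q, where a triple ideal is an F-subspace I such that xyi ∈ I, xiy ∈ I, and iyx ∈ I for all i ∈ I, x,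 y ∈ Q — if and only if either the algebra (Q,·) is simple (its only two-sided ideals are 0 and Q) or (Q,·) is isomorphic as an F-algebra to F × F. -/
open QuadraticMap

section Stmt15Aux
variable {F Q : Type*} [Field F] [AddCommGroup Q] [Module F Q]

noncomputable def stmt15T (N : QuadraticForm F Q) (one : Q) : Q →ₗ[F] F where
  toFun := fun x => polar N x one
  map_add' := fun a b => by simpa using polar_add_left (Q := N) a b one
  map_smul' := fun c a => by
    simpa [smul_eq_mul] using polar_smul_left (Q := N) c a one

@[simp] lemma stmt15T_apply (N : QuadraticForm F Q) (one x : Q) :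
    stmt15T N one x = polar N x one := rfl

variable {mul : Q →ₗ[F] Q →ₗ[F] Q} {one : Q} {N : QuadraticForm F Q}

lemma stmt15_lin_quad
    (hquad : ∀ x : Q, mul x x - polar N x one • x + N x • one = 0)
    (x y : Q) :
    mul x y + mul y x
      = polar N x one • y + polar N y one • x - polar N x y • one := by
  have h1 := hquad (x + y)
  have h2 := hquad x
  have h3 := hquad y
  have e1 : mul (x+y) (x+y) = mul x x + mul x y + mul y x + mul y y := by
    simp only [map_add, LinearMap.add_apply]; abel
  have e2 : polar N (x+y) one = polar N x one + polar N y one :=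
    polar_add_left N x y one
  have e3 : N (x+y) = N x + N y + polar N x y := by
    rw [QuadraticMap.polar]; ring
  rw [e1, e2, e3] at h1
  linear_combination (norm := module) h1 - h2 - h3

lemma stmt15_t_one (hN1 : N one = 1) : polar N one one = (2 : F) := by
  rw [QuadraticMap.polar, show one + one = (2:F) • one from (two_smul F one).symm,
    QuadraticMap.map_smul, hN1]
  norm_num [smul_eq_mul]

lemma stmt15_trace_mul (hN1 : N one = 1)
    (honel : ∀ x : Q, mul one x = x) (honer : ∀ x : Q, mul x one = x)
    (hquad : ∀ x : Q, mul x x - polar N x one • x + N x • one = 0)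
    (flex : ∀ x y : Q, mul (mul x y) x = mul x (mul y x))
    (x y : Q) :
    polar N (mul x y) one = polar N x one * polar N y one - polar N x y := by
  by_cases hx : ∃ γ : F, x = γ • one
  · obtain ⟨γ, rfl⟩ := hx
    have e1 : mul ((γ:F) • one) y = γ • y := by
      rw [_root_.map_smul, LinearMap.smul_apply, honel]
    rw [e1, polar_smul_left, polar_smul_left, polar_smul_left,
      stmt15_t_one hN1, polar_comm N one y]
    simp [smul_eq_mul]; ring
  · have l1 := stmt15_lin_quad hquad (mul x y) x
    have l2 := stmt15_lin_quad hquad y x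
    have l3 := hquad x
    have hf := flex x y
    have l2' : mul x (mul y x)
        = polar N y one • mul x x + polar N x one • mul x y
          - polar N y x • x - mul x (mul x y) := by
      have : mul y x = polar N y one • x + polar N x one • y
          - polar N y x • one - mul x y := by
        linear_combination (norm := module) l2
      rw [this]
      simp only [map_add, _root_.map_sub, _root_.map_smul, LinearMap.add_apply,
        LinearMap.sub_apply, LinearMap.smul_apply, honer]
    rw [l2'] at hf
    rw [polar_comm N y x] at hf
    have key : (polar N (mul x y) one - polar N x one * polar N y one
          + polar N x y) • x
        = (polar N (mul x y) x - polar N y one * N x) • one := by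
      linear_combination (norm := module) hf - l1 + polar N y one • l3
    by_cases h0 : polar N (mul x y) one - polar N x one * polar N y one
        + polar N x y = 0
    · linear_combination h0
    · exfalso
      refine hx ⟨(polar N (mul x y) one - polar N x one * polar N y one
          + polar N x y)⁻¹ * (polar N (mul x y) x - polar N y one * N x), ?_⟩
      have := congrArg (fun w => (polar N (mul x y) one
          - polar N x one * polar N y one + polar N x y)⁻¹ • w) key
      simpa [smul_smul, inv_mul_cancel₀ h0] using this

lemma stmt15_der_trace
    (honel : ∀ x : Q, mul one x = x) (honer : ∀ x : Q, mul x one = x)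
    (hquad : ∀ x : Q, mul x x - polar N x one • x + N x • one = 0)
    (d : Q →ₗ[F] Q)
    (hd : ∀ a b : Q, d (mul a b) = mul (d a) b + mul a (d b)) (z : Q) :
    polar N (d z) one = 0 := by
  have hone : d one = 0 := by
    have h := hd one one
    rw [honel, honer, honel] at h
    exact add_eq_left.mp h.symm
  by_cases hz : ∃ γ : F, z = γ • one
  · obtain ⟨γ, rfl⟩ := hz
    rw [_root_.map_smul, hone, smul_zero, polar_zero_left]
  · have h1 := hd z z
    have h4 : mul z z = polar N z one • z - N z • one := by
      linear_combination (norm := module) hquad z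
    rw [h4, _root_.map_sub, _root_.map_smul, _root_.map_smul, hone, smul_zero] at h1
    have h3 := stmt15_lin_quad hquad (d z) z
    have key : polar N (d z) one • z = polar N (d z) z • one := by
      linear_combination (norm := module) -h1 - h3
    by_cases h0 : polar N (d z) one = 0
    · exact h0
    · exfalso
      refine hz ⟨(polar N (d z) one)⁻¹ * polar N (d z) z, ?_⟩
      have := congrArg (fun w => (polar N (d z) one)⁻¹ • w) key
      simpa [smul_smul, inv_mul_cancel₀ h0] using this

lemma stmt15_trip_trace
    (honel : ∀ x : Q, mul one x = x) (honer : ∀ x : Q, mul x one = x)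
    (hquad : ∀ x : Q, mul x x - polar N x one • x + N x • one = 0)
    (hder : ∀ x y a b : Q,
      Dop mul x y (mul a b) = mul (Dop mul x y a) b + mul a (Dop mul x y b))
    (a y z : Q) :
    polar N (mul (mul a y) z - mul a (mul y z) + mul y (mul a z)) one
      = polar N (mul (mul y a) z) one := by
  have h0 := stmt15_der_trace honel honer hquad (Dop mul a y) (hder a y) z
  have e : Dop mul a y z
      = mul (mul a y) z - mul (mul y a) z - mul a (mul y z) + mul y (mul a z) := by
    simp only [Dop, LinearMap.sub_apply, _root_.map_sub, LinearMap.coe_comp,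
      Function.comp_apply]
    abel
  rw [e] at h0
  have e2 : mul (mul a y) z - mul (mul y a) z - mul a (mul y z) + mul y (mul a z)
      = (mul (mul a y) z - mul a (mul y z) + mul y (mul a z)) - mul (mul y a) z := by
    abel
  rw [e2, polar_sub_left] at h0
  linear_combination h0

end Stmt15Aux



/-- Let `Q` be a nonzero unital quadratic algebra over a field of characteristic
`≠ 2` (quadratic form `N`, `N(1) = 1`, `x·x − N(x,1)x + N(x)1 = 0`) in the
variety `𝒱`.  With `x̄ := N(x,1)1 − x` and the triple product
`xyz := (x̄·y)·z − x̄·(y·z) + y·(x̄·z)`, the triple system `(Q, xyz)` is simple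
(its only triple ideals are `0` and `Q`) if and only if either the algebra
`(Q,·)` is simple (its only two-sided ideals are `0` and `Q`) or `(Q,·)` is
isomorphic as an `F`-algebra to `F × F`. -/
theorem stmt15 {F Q : Type*} [Field F] [AddCommGroup Q] [Module F Q]
    [Nontrivial Q]
    (hchar : (2 : F) ≠ 0)
    (mul : Q →ₗ[F] Q →ₗ[F] Q) (one : Q)
    (honel : ∀ x : Q, mul one x = x) (honer : ∀ x : Q, mul x one = x)
    (N : QuadraticForm F Q) (hN1 : N one = 1)
    (hquad : ∀ x : Q,
      mul x x - QuadraticMap.polar N x one • x + N x • one = 0)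
    (flex : ∀ x y : Q, mul (mul x y) x = mul x (mul y x))
    (jordan : ∀ x y : Q, mul (mul x y) (mul x x) = mul x (mul y (mul x x)))
    (hder : ∀ x y a b : Q,
      Dop mul x y (mul a b) = mul (Dop mul x y a) b + mul a (Dop mul x y b)) :
    (∀ I : Submodule F Q,
      (∀ i ∈ I, ∀ x y : Q,
        qtrip mul N one x y i ∈ I ∧ qtrip mul N one x i y ∈ I ∧
          qtrip mul N one i y x ∈ I) →
      I = ⊥ ∨ I = ⊤) ↔
    ((∀ I : Submodule F Q,
        (∀ i ∈ I, ∀ x : Q, mul x i ∈ I ∧ mul i x ∈ I) → I = ⊥ ∨ I = ⊤) ∨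
      (∃ φ : Q ≃ₗ[F] F × F,
        φ one = 1 ∧ ∀ x y : Q, φ (mul x y) = φ x * φ y)) := by
  have h1bar : polar N one one • one - one = one := by
    rw [stmt15_t_one hN1, two_smul]; abel
  constructor
  · -- forward direction
    intro htrip
    by_cases hsimp : ∀ I : Submodule F Q,
        (∀ i ∈ I, ∀ x : Q, mul x i ∈ I ∧ mul i x ∈ I) → I = ⊥ ∨ I = ⊤
    · exact Or.inl hsimp
    · right
      push_neg at hsimp
      obtain ⟨I, hI, hIbot, hItop⟩ := hsimp
      -- basic facts about I
      have hone_not : one ∉ I := by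
        intro h
        apply hItop
        rw [Submodule.eq_top_iff']
        intro x
        have := (hI one h x).1
        rwa [honer] at this
      have hscal : ∀ α : F, α • one ∈ I → α = 0 := by
        intro α h
        by_contra hα
        have h3 := I.smul_mem (α⁻¹) h
        rw [smul_smul, inv_mul_cancel₀ hα, one_smul] at h3
        exact hone_not h3
      have hNI : ∀ j ∈ I, N j = 0 := by
        intro j hj
        have e : N j • one = polar N j one • j - mul j j := by
          linear_combination (norm := module) hquad j
        have : N j • one ∈ I := by
          rw [e]; exact sub_mem (I.smul_mem _ hj) (hI j hj j).1
        exact hscal _ this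
      have hpolarI : ∀ j ∈ I, polar N j one = 0 → ∀ u : Q, polar N u j = 0 := by
        intro j hj hjt u
        have l := stmt15_lin_quad hquad u j
        have e : polar N u j • one
            = polar N u one • j + polar N j one • u - mul u j - mul j u := by
          linear_combination (norm := module) l
        rw [hjt, zero_smul, add_zero] at e
        have : polar N u j • one ∈ I := by
          rw [e]
          exact sub_mem (sub_mem (I.smul_mem (polar N u one) hj)
            (hI j hj u).1) (hI j hj u).2
        exact hscal _ this
      have htmul : ∀ j ∈ I, polar N j one = 0 →
          ∀ u : Q, polar N (mul u j) one = 0 ∧ polar N (mul j u) one = 0 := by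
        intro j hj hjt u
        constructor
        · rw [stmt15_trace_mul hN1 honel honer hquad flex u j, hjt,
            hpolarI j hj hjt u]
          ring
        · rw [stmt15_trace_mul hN1 honel honer hquad flex j u, hjt,
            polar_comm N j u, hpolarI j hj hjt u]
          ring
      -- the trace-zero part of I is a triple ideal
      set T := stmt15T N one with hTdef
      set I₀ : Submodule F Q := I ⊓ LinearMap.ker T with hI₀
      have hmemI₀ : ∀ j : Q, j ∈ I₀ ↔ j ∈ I ∧ polar N j one = 0 := by
        intro j
        simp [hI₀, LinearMap.mem_ker, Submodule.mem_inf, hTdef]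
      have hI₀cl : ∀ j ∈ I₀, ∀ x y : Q,
          qtrip mul N one x y j ∈ I₀ ∧ qtrip mul N one x j y ∈ I₀ ∧
            qtrip mul N one j y x ∈ I₀ := by
        intro j hj x y
        obtain ⟨hjI, hjt⟩ := (hmemI₀ j).mp hj
        refine ⟨?_, ?_, ?_⟩
        · -- qtrip x y j
          rw [hmemI₀]
          constructor
          · simp only [qtrip]
            refine add_mem (sub_mem ?_ ?_) ?_
            · exact (hI j hjI _).1
            · exact (hI (mul y j) (hI j hjI y).1 _).1
            · exact (hI (mul _ j) (hI j hjI _).1 y).1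
          · have := stmt15_trip_trace honel honer hquad hder
              (polar N x one • one - x) y j
            simp only [qtrip]
            rw [this]
            exact (htmul j hjI hjt _).1
        · -- qtrip x j y
          rw [hmemI₀]
          constructor
          · simp only [qtrip]
            refine add_mem (sub_mem ?_ ?_) ?_
            · exact (hI (mul (polar N x one • one - x) j) ((hI j hjI _).1) y).2
            · exact (hI (mul j y) ((hI j hjI y).2) (polar N x one • one - x)).1
            · exact (hI j hjI (mul (polar N x one • one - x) y)).2
          · have := stmt15_trip_trace honel honer hquad hder
              (polar N x one • one - x) j y
            simp only [qtrip]
            rw [this]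
            have hmjX : mul j (polar N x one • one - x) ∈ I :=
              (hI j hjI _).2
            have hmjXt : polar N (mul j (polar N x one • one - x)) one = 0 :=
              (htmul j hjI hjt _).2
            exact (htmul (mul j (polar N x one • one - x)) hmjX hmjXt y).2
        · -- qtrip j y x
          rw [hmemI₀]
          have hbar : polar N j one • one - j = -j := by
            rw [hjt, zero_smul, zero_sub]
          constructor
          · simp only [qtrip, hbar]
            refine add_mem (sub_mem ?_ ?_) ?_
            · exact (hI (mul (-j) y) ((hI (-j) (neg_mem hjI) y).2) x).2
            · exact (hI (-j) (neg_mem hjI) (mul y x)).2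
            · exact (hI (mul (-j) x) ((hI (-j) (neg_mem hjI) x).2) y).1
          · have := stmt15_trip_trace honel honer hquad hder (-j) y x
            simp only [qtrip, hbar]
            rw [this]
            have e3 : mul (mul y (-j)) x = (-1 : F) • mul (mul y j) x := by
              simp only [_root_.map_neg, LinearMap.neg_apply, neg_smul, one_smul]
            rw [e3, polar_smul_left]
            have : polar N (mul (mul y j) x) one = 0 :=
              (htmul (mul y j) ((hI j hjI y).1) ((htmul j hjI hjt y).1) x).2
            rw [this]
            simp
      have hI₀bot : I₀ = ⊥ := by
        rcases htrip I₀ hI₀cl with h | h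
        · exact h
        · exfalso
          apply hItop
          rw [eq_top_iff]
          calc (⊤ : Submodule F Q) = I₀ := h.symm
            _ ≤ I := inf_le_left
      -- extract an idempotent spanning I
      obtain ⟨i, hiI, hine0⟩ := (Submodule.ne_bot_iff I).mp hIbot
      have hti : polar N i one ≠ 0 := by
        intro h
        apply hine0
        have : i ∈ I₀ := (hmemI₀ i).mpr ⟨hiI, h⟩
        rw [hI₀bot] at this
        simpa using this
      set e : Q := (polar N i one)⁻¹ • i with hedef
      have heI : e ∈ I := I.smul_mem _ hiI
      have hte : polar N e one = 1 := by
        rw [hedef, polar_smul_left, smul_eq_mul, inv_mul_cancel₀ hti]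
      have hNe : N e = 0 := hNI e heI
      have hee : mul e e = e := by
        have h := hquad e
        rw [hte, hNe] at h
        linear_combination (norm := module) h
      have he0 : e ≠ 0 := by
        intro h
        rw [h, polar_zero_left] at hte
        exact one_ne_zero hte.symm
      have hjId : ∀ j ∈ I, j = polar N j one • e := by
        intro j hj
        have hmem : j - polar N j one • e ∈ I₀ := by
          rw [hmemI₀]
          refine ⟨sub_mem hj (I.smul_mem _ heI), ?_⟩
          rw [polar_sub_left, polar_smul_left, hte, smul_eq_mul, mul_one,
            sub_self]
        rw [hI₀bot] at hmem
        have := (Submodule.mem_bot F).mp hmem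
        linear_combination (norm := module) this
      have hspan : ∀ x : Q, ∃ a b : F, x = a • one + b • e := by
        intro x
        have l := stmt15_lin_quad hquad x e
        rw [hte, one_smul] at l
        rw [hjId (mul x e) (hI e heI x).1, hjId (mul e x) (hI e heI x).2] at l
        exact ⟨polar N x e, polar N (mul x e) one + polar N (mul e x) one
          - polar N x one, by linear_combination (norm := module) -l⟩
      have hind : ∀ a b : F, a • one + b • e = 0 → a = 0 ∧ b = 0 := by
        intro a b h
        have ha : a = 0 := by
          by_contra ha
          apply hone_not
          have h2 : one = (-(a⁻¹ * b)) • e := by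
            have h3 := congrArg (fun w => a⁻¹ • w) h
            simp only [smul_add, smul_smul, inv_mul_cancel₀ ha, one_smul,
              smul_zero] at h3
            linear_combination (norm := module) h3
          rw [h2]
          exact I.smul_mem _ heI
        refine ⟨ha, ?_⟩
        rw [ha, zero_smul, zero_add] at h
        rcases smul_eq_zero.mp h with h' | h'
        · exact h'
        · exact absurd h' he0
      -- build the isomorphism
      set ψ : (F × F) →ₗ[F] Q :=
        { toFun := fun p => p.1 • (one - e) + p.2 • e,
          map_add' := by
            intro p q
            simp only [Prod.fst_add, Prod.snd_add, add_smul]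
            abel,
          map_smul' := by
            intro c p
            simp only [Prod.smul_fst, Prod.smul_snd, smul_eq_mul,
              RingHom.id_apply, mul_smul, smul_add] } with hψdef
      have hψ : ∀ p : F × F, ψ p = p.1 • (one - e) + p.2 • e := fun p => rfl
      have hbij : Function.Bijective ψ := by
        constructor
        · intro p q h
          rw [hψ, hψ] at h
          have h' : (p.1 - q.1) • one + (p.2 - p.1 - (q.2 - q.1)) • e = 0 := by
            linear_combination (norm := module) h
          obtain ⟨h1, h2⟩ := hind _ _ h'
          have e1 : p.1 = q.1 := by linear_combination h1
          have e2 : p.2 = q.2 := by linear_combination h2 + h1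
          exact Prod.ext e1 e2
        · intro x
          obtain ⟨a, b, hx⟩ := hspan x
          refine ⟨(a, a + b), ?_⟩
          rw [hψ, hx]
          module
      set E := LinearEquiv.ofBijective ψ hbij with hEdef
      have hE : ∀ p : F × F, E p = ψ p := fun p => rfl
      set φ := E.symm with hφdef
      have hφψ : ∀ p : F × F, φ (ψ p) = p := by
        intro p
        rw [← hE, hφdef]
        exact E.symm_apply_apply p
      have hψφ : ∀ x : Q, ψ (φ x) = x := by
        intro x
        rw [← hE, hφdef]
        exact E.apply_symm_apply x
      have hone_eq : ψ (1, 1) = one := by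
        rw [hψ]
        simp only [one_smul]
        abel
      have hmulff : mul (one - e) (one - e) = one - e := by
        simp only [_root_.map_sub, LinearMap.sub_apply, honel, honer, hee]
        abel
      have hmulfe : mul (one - e) e = 0 := by
        simp only [_root_.map_sub, LinearMap.sub_apply, honel, hee, sub_self]
      have hmulef : mul e (one - e) = 0 := by
        simp only [_root_.map_sub, honer, hee, sub_self]
      have hψmul : ∀ p q : F × F, mul (ψ p) (ψ q) = ψ (p * q) := by
        intro p q
        rw [hψ, hψ, hψ, Prod.fst_mul, Prod.snd_mul]
        simp only [map_add, _root_.map_smul, LinearMap.add_apply,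
          LinearMap.smul_apply, hmulff, hmulfe, hmulef, hee, smul_zero]
        module
      refine ⟨φ, ?_, ?_⟩
      · rw [← hone_eq, hφψ]; rfl
      · intro x y
        have : mul x y = ψ (φ x * φ y) := by
          conv_lhs => rw [← hψφ x, ← hψφ y]
          rw [hψmul]
        rw [this, hφψ]
  · -- backward direction
    intro h I hIcl
    rcases h with halg | ⟨φ, hφ1, hφm⟩
    · apply halg I
      intro i hi x
      constructor
      · have h1 := (hIcl i hi one x).1
        have e : qtrip mul N one one x i = mul x i := by
          simp only [qtrip, h1bar, honel]; abel
        rwa [e] at h1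
      · have h1 := (hIcl i hi one x).2.1
        have e : qtrip mul N one one i x = mul i x := by
          simp only [qtrip, h1bar, honel]; abel
        rwa [e] at h1
    · by_cases hbot : I = ⊥
      · exact Or.inl hbot
      right
      have hinj : Function.Injective φ := φ.injective
      have key : ∀ (X y z : Q),
          φ (mul (mul X y) z - mul X (mul y z) + mul y (mul X z))
            = φ X * φ y * φ z := by
        intro X y z
        simp only [map_add, _root_.map_sub, hφm]
        ring
      set e' := φ.symm (0, 1) with he'def
      set f' := φ.symm (1, 0) with hf'def
      have hφe' : φ e' = (0, 1) := φ.apply_symm_apply _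
      have hφf' : φ f' = (1, 0) := φ.apply_symm_apply _
      have hmule' : mul e' e' = e' := by
        apply hinj
        rw [hφm, hφe', Prod.mk_mul_mk]
        norm_num
      have hmulf' : mul f' f' = f' := by
        apply hinj
        rw [hφm, hφf', Prod.mk_mul_mk]
        norm_num
      have hNte' : N e' = 0 ∧ polar N e' one = 1 := by
        have h := congrArg φ (hquad e')
        rw [map_add, _root_.map_sub, _root_.map_smul, _root_.map_smul,
          map_zero, hmule', hφe', hφ1] at h
        have h1 := congrArg Prod.fst h
        have h2 := congrArg Prod.snd h
        simp only [Prod.fst_add, Prod.fst_sub, Prod.snd_add, Prod.snd_sub,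
          Prod.smul_fst, Prod.smul_snd, Prod.fst_one, Prod.snd_one,
          Prod.fst_zero, Prod.snd_zero, smul_eq_mul, mul_zero, mul_one] at h1 h2
        exact ⟨by linear_combination h1, by linear_combination h1 - h2⟩
      have hNtf' : N f' = 0 ∧ polar N f' one = 1 := by
        have h := congrArg φ (hquad f')
        rw [map_add, _root_.map_sub, _root_.map_smul, _root_.map_smul,
          map_zero, hmulf', hφf', hφ1] at h
        have h1 := congrArg Prod.fst h
        have h2 := congrArg Prod.snd h
        simp only [Prod.fst_add, Prod.fst_sub, Prod.snd_add, Prod.snd_sub,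
          Prod.smul_fst, Prod.smul_snd, Prod.fst_one, Prod.snd_one,
          Prod.fst_zero, Prod.snd_zero, smul_eq_mul, mul_zero, mul_one] at h1 h2
        exact ⟨by linear_combination h2, by linear_combination h2 - h1⟩
      have hXe' : φ (polar N e' one • one - e') = ((1 : F), (0 : F)) := by
        rw [hNte'.2, one_smul, _root_.map_sub, hφ1, hφe']
        rw [show (1 : F × F) = ((1:F),(1:F)) from rfl, Prod.mk_sub_mk]
        norm_num
      have hXf' : φ (polar N f' one • one - f') = ((0 : F), (1 : F)) := by
        rw [hNtf'.2, one_smul, _root_.map_sub, hφ1, hφf']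
        rw [show (1 : F × F) = ((1:F),(1:F)) from rfl, Prod.mk_sub_mk]
        norm_num
      -- triple product images
      have keyq : ∀ x y z : Q, φ (qtrip mul N one x y z)
          = φ (polar N x one • one - x) * φ y * φ z := by
        intro x y z
        simp only [qtrip]
        exact key _ _ _
      obtain ⟨i, hiI, hi0⟩ := (Submodule.ne_bot_iff I).mp hbot
      have hφi0 : φ i ≠ 0 := fun h => hi0 (by
        have := congrArg φ.symm h
        simpa using this)
      have hef : e' ∈ I ∧ f' ∈ I := by
        rcases eq_or_ne (φ i).1 0 with ha | ha
        · -- second coordinate nonzero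
          have hb : (φ i).2 ≠ 0 := by
            intro hb
            apply hφi0
            have : φ i = ((φ i).1, (φ i).2) := rfl
            rw [this, ha, hb]; rfl
          have he'I : e' ∈ I := by
            have h1 := (hIcl i hiI f' (φ.symm (0, (φ i).2⁻¹))).1
            have h2 : φ (qtrip mul N one f' (φ.symm (0, (φ i).2⁻¹)) i)
                = ((0 : F), (1 : F)) := by
              rw [keyq, hXf', φ.apply_symm_apply]
              have : φ i = ((φ i).1, (φ i).2) := rfl
              rw [this, ha, Prod.mk_mul_mk, Prod.mk_mul_mk]
              simp [inv_mul_cancel₀ hb]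
            have h3 : qtrip mul N one f' (φ.symm (0, (φ i).2⁻¹)) i = e' := by
              apply hinj; rw [h2, hφe']
            rwa [h3] at h1
          have hf'I : f' ∈ I := by
            have h1 := (hIcl e' he'I f' f').2.2
            have h2 : φ (qtrip mul N one e' f' f') = ((1 : F), (0 : F)) := by
              rw [keyq, hXe', hφf', Prod.mk_mul_mk, Prod.mk_mul_mk]
              norm_num
            have h3 : qtrip mul N one e' f' f' = f' := by
              apply hinj; rw [h2, hφf']
            rwa [h3] at h1
          exact ⟨he'I, hf'I⟩
        · -- first coordinate nonzero
          have hf'I : f' ∈ I := by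
            have h1 := (hIcl i hiI e' (φ.symm ((φ i).1⁻¹, 0))).1
            have h2 : φ (qtrip mul N one e' (φ.symm ((φ i).1⁻¹, 0)) i)
                = ((1 : F), (0 : F)) := by
              rw [keyq, hXe', φ.apply_symm_apply]
              have : φ i = ((φ i).1, (φ i).2) := rfl
              rw [this, Prod.mk_mul_mk, Prod.mk_mul_mk]
              simp [inv_mul_cancel₀ ha]
            have h3 : qtrip mul N one e' (φ.symm ((φ i).1⁻¹, 0)) i = f' := by
              apply hinj; rw [h2, hφf']
            rwa [h3] at h1
          have he'I : e' ∈ I := by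
            have h1 := (hIcl f' hf'I e' e').2.2
            have h2 : φ (qtrip mul N one f' e' e') = ((0 : F), (1 : F)) := by
              rw [keyq, hXf', hφe', Prod.mk_mul_mk, Prod.mk_mul_mk]
              norm_num
            have h3 : qtrip mul N one f' e' e' = e' := by
              apply hinj; rw [h2, hφe']
            rwa [h3] at h1
          exact ⟨he'I, hf'I⟩
      have honeI : one ∈ I := by
        have he'f' : e' + f' = one := by
          apply hinj
          rw [map_add, hφe', hφf', hφ1, Prod.mk_add_mk,
            show (1 : F × F) = ((1:F),(1:F)) from rfl]
          norm_num
        rw [← he'f']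
        exact add_mem hef.1 hef.2
      rw [Submodule.eq_top_iff']
      intro x
      have h4 := (hIcl one honeI x one).2.2
      have e : qtrip mul N one one one x = x := by
        simp only [qtrip, h1bar, honel]; abel
      rwa [e] at h4
end
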